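/- Let D = (..., a, b, ...) be a diagram obtained from a diagram D' = (..., a', b', ...) by a sequence of m-reductions, where a, a' occupy the same layer position and b, b' occupy the same (immediately following) layer position. If each reduction acting on the layer position of a also acts on the layer position of b with a strictly larger decrement, each decrement is at most m, and b > 0, then a + (a - b + b' - a') * m >= a'. -/

import Mathlib

/-- Numerical content of the throw-out proposition: if layers (a', b') are
lowered to (a, b) by decrements d_i ≤ m and e_i with e_i > d_i whenever
d_i > 0, and b > 0, then a + (a - b + b' - a')·m ≥ a'. -/
theorem throwout (m : ℕ) (n : ℕ) (a a' b b' : ℤ) (d e : Fin n → ℤ)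
    (hd0 : ∀ i, 0 ≤ d i) (hdm : ∀ i, d i ≤ (m : ℤ))
    (he0 : ∀ i, 0 ≤ e i)
    (hde : ∀ i, 0 < d i → d i < e i)
    (ha : a = a' - ∑ i, d i) (hb : b = b' - ∑ i, e i)
    (hbpos : 0 < b) :
    a' ≤ a + (a - b + b' - a') * (m : ℤ) := by
  subst ha hb
  set s := Finset.univ.filter (fun i => 0 < d i) with hs
  have hcard : (s.card : ℤ) ≤ ∑ i, (e i - d i) := by
    calc (s.card : ℤ) = ∑ i ∈ s, (1 : ℤ) := by simp
    _ ≤ ∑ i ∈ s, (e i - d i) := by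
        apply Finset.sum_le_sum
        intro i hi
        have hdi : 0 < d i := (Finset.mem_filter.mp hi).2
        have := hde i hdi
        omega
    _ ≤ ∑ i, (e i - d i) := by
        apply Finset.sum_le_sum_of_subset_of_nonneg (Finset.subset_univ s)
        intro i _ hi
        have : ¬ 0 < d i := by simpa [hs] using hi
        have := hd0 i
        have := he0 i
        omega
  have hsum : ∑ i, d i ≤ (s.card : ℤ) * m := by
    calc ∑ i, d i = ∑ i ∈ s, d i := by
          symm
          apply Finset.sum_subset (Finset.subset_univ s)
          intro i _ hi
          have : ¬ 0 < d i := by simpa [hs] using hi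
          have := hd0 i
          omega
    _ ≤ ∑ i ∈ s, (m : ℤ) := Finset.sum_le_sum (fun i _ => hdm i)
    _ = (s.card : ℤ) * m := by simp [mul_comm]
  have hm : (0 : ℤ) ≤ m := Int.natCast_nonneg m
  have : ∑ i, d i ≤ (∑ i, (e i - d i)) * m := by
    calc ∑ i, d i ≤ (s.card : ℤ) * m := hsum
    _ ≤ (∑ i, (e i - d i)) * m := mul_le_mul_of_nonneg_right hcard hm
  have hsep : ∑ i, (e i - d i) = ∑ i, e i - ∑ i, d i := Finset.sum_sub_distrib _ _
  rw [hsep] at this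
  linarith [this]
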